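/- Let X and Y be Banach spaces over ℝ. If X is almost reflexive and very-irreflexive, and Y is weakly sequentially complete, then every bounded linear operator T : X → Y is strictly singular. -/

import Mathlib

/-! If `T` were bounded below on an infinite-dimensional closed subspace `X₀`, then `X₀` would be
reflexive. Indeed, a bounded sequence in `X₀` has a weakly Cauchy subsequence, whose image under
`T` converges weakly in `Y` by weak sequential completeness. The limit lies in the closed, hence
weakly closed, subspace `T X₀`, and since every functional on `X₀` factors through `T` by
Hahn–Banach, the subsequence converges weakly in `X₀` to the preimage of that limit. -/

open Filter Topology

section Defs

variable {E : Type*} [NormedAddCommGroup E] [NormedSpace ℝ E]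
variable {F : Type*} [NormedAddCommGroup F] [NormedSpace ℝ F]

/-- A sequence converges weakly to `x₀`. -/
def WeakConvTo (x : ℕ → E) (x₀ : E) : Prop :=
  ∀ f : E →L[ℝ] ℝ, Tendsto (fun n => f (x n)) atTop (𝓝 (f x₀))

/-- A sequence is weakly Cauchy. -/
def WeaklyCauchySeq (x : ℕ → E) : Prop :=
  ∀ f : E →L[ℝ] ℝ, ∃ L : ℝ, Tendsto (fun n => f (x n)) atTop (𝓝 L)

/-- Every bounded sequence has a weakly Cauchy subsequence. -/
def AlmostReflexive (E : Type*) [NormedAddCommGroup E] [NormedSpace ℝ E] : Prop :=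
  ∀ x : ℕ → E, (∃ C : ℝ, ∀ n, ‖x n‖ ≤ C) →
    ∃ φ : ℕ → ℕ, StrictMono φ ∧ WeaklyCauchySeq (x ∘ φ)

/-- Every weakly convergent sequence converges in norm. -/
def SchurProperty (E : Type*) [NormedAddCommGroup E] [NormedSpace ℝ E] : Prop :=
  ∀ (x : ℕ → E) (x₀ : E), WeakConvTo x x₀ → Tendsto x atTop (𝓝 x₀)

/-- Sequential reflexivity: every bounded sequence has a weakly convergent subsequence. -/
def SeqReflexive (E : Type*) [NormedAddCommGroup E] [NormedSpace ℝ E] : Prop :=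
  ∀ x : ℕ → E, (∃ C : ℝ, ∀ n, ‖x n‖ ≤ C) →
    ∃ φ : ℕ → ℕ, StrictMono φ ∧ ∃ x₀ : E, WeakConvTo (x ∘ φ) x₀

/-- Every weakly Cauchy sequence converges weakly. -/
def WeaklySeqComplete (E : Type*) [NormedAddCommGroup E] [NormedSpace ℝ E] : Prop :=
  ∀ x : ℕ → E, WeaklyCauchySeq x → ∃ x₀ : E, WeakConvTo x x₀

/-- No infinite-dimensional closed subspace is (sequentially) reflexive. -/
def VeryIrreflexive (E : Type*) [NormedAddCommGroup E] [NormedSpace ℝ E] : Prop :=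
  ∀ X₀ : Subspace ℝ E, IsClosed (X₀ : Set E) → ¬FiniteDimensional ℝ X₀ →
    ¬SeqReflexive X₀

/-- A strictly singular bounded operator: on no infinite-dimensional closed subspace is it
an isomorphism onto its image. -/
def StrictlySingular (T : E →L[ℝ] F) : Prop :=
  ∀ X₀ : Subspace ℝ E, IsClosed (X₀ : Set E) → ¬FiniteDimensional ℝ X₀ →
    ¬∃ c : ℝ, 0 < c ∧ ∀ x ∈ X₀, c * ‖x‖ ≤ ‖T x‖

/-- A weakly compact operator. -/
def WeaklyCompactOp (T : E →L[ℝ] F) : Prop :=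
  ∀ x : ℕ → E, (∃ C : ℝ, ∀ n, ‖x n‖ ≤ C) →
    ∃ φ : ℕ → ℕ, StrictMono φ ∧ ∃ y : F, WeakConvTo (fun n => T (x (φ n))) y

/-- A completely continuous operator maps weakly convergent sequences to norm convergent ones. -/
def CompletelyContinuousOp (T : E →L[ℝ] F) : Prop :=
  ∀ (x : ℕ → E) (x₀ : E), WeakConvTo x x₀ → ∃ y : F, Tendsto (fun n => T (x n)) atTop (𝓝 y)

/-- The image of the closed unit ball is relatively compact in norm. -/
def CompactOp (T : E →L[ℝ] F) : Prop :=
  IsCompact (closure (⇑T '' Metric.closedBall (0 : E) 1))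

/-- The Dunford–Pettis property. -/
def DunfordPettisProp (E : Type*) [NormedAddCommGroup E] [NormedSpace ℝ E] : Prop :=
  ∀ (Z : Type*) [NormedAddCommGroup Z] [NormedSpace ℝ Z] [CompleteSpace Z],
    ∀ T : E →L[ℝ] Z, WeaklyCompactOp T → CompletelyContinuousOp T

/-- The reciprocal Dunford–Pettis property. -/
def ReciprocalDunfordPettisProp (E : Type*) [NormedAddCommGroup E] [NormedSpace ℝ E] : Prop :=
  ∀ (Z : Type*) [NormedAddCommGroup Z] [NormedSpace ℝ Z] [CompleteSpace Z],
    ∀ T : E →L[ℝ] Z, CompletelyContinuousOp T → WeaklyCompactOp T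

/-- The Dieudonné property. -/
def DieudonneProp (E : Type*) [NormedAddCommGroup E] [NormedSpace ℝ E] : Prop :=
  ∀ (Z : Type*) [NormedAddCommGroup Z] [NormedSpace ℝ Z] [CompleteSpace Z],
    ∀ T : E →L[ℝ] Z,
      (∀ x : ℕ → E, WeaklyCauchySeq x → ∃ y : Z, WeakConvTo (fun n => T (x n)) y) →
      WeaklyCompactOp T

/-- A Grothendieck space: weak*-convergent sequences in the dual converge weakly. -/
def GrothendieckSpace (E : Type*) [NormedAddCommGroup E] [NormedSpace ℝ E] : Prop :=
  ∀ (f : ℕ → (E →L[ℝ] ℝ)) (g : E →L[ℝ] ℝ),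
    (∀ x : E, Tendsto (fun n => f n x) atTop (𝓝 (g x))) →
    ∀ F : (E →L[ℝ] ℝ) →L[ℝ] ℝ, Tendsto (fun n => F (f n)) atTop (𝓝 (F g))

/-- The Banach space ℓ¹ of absolutely summable real sequences. -/
abbrev EllOne : Type := lp (fun _ : ℕ => ℝ) 1

/-- Quasi-reflexive: the canonical image of `E` in its bidual has finite codimension. -/
def QuasiReflexive (E : Type*) [NormedAddCommGroup E] [NormedSpace ℝ E] : Prop :=
  FiniteDimensional ℝ
    ((StrongDual ℝ (StrongDual ℝ E)) ⧸
      LinearMap.range (NormedSpace.inclusionInDoubleDual ℝ E).toLinearMap)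

/-- Hereditarily-ℓ¹: every infinite-dimensional closed subspace contains a closed subspace
topologically isomorphic to ℓ¹. -/
def HereditarilyEllOne (E : Type*) [NormedAddCommGroup E] [NormedSpace ℝ E] : Prop :=
  ∀ X₀ : Subspace ℝ E, IsClosed (X₀ : Set E) → ¬FiniteDimensional ℝ X₀ →
    ∃ Z : Subspace ℝ E, Z ≤ X₀ ∧ IsClosed (Z : Set E) ∧ Nonempty (Z ≃L[ℝ] EllOne)

end Defs

section WeakSequences

variable {E F : Type*} [NormedAddCommGroup E] [NormedSpace ℝ E] [NormedAddCommGroup F]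
  [NormedSpace ℝ F]

theorem WeaklyCauchySeq.map {x : ℕ → E} (hx : WeaklyCauchySeq x) (T : E →L[ℝ] F) :
    WeaklyCauchySeq fun n => T (x n) :=
  fun f => hx (f.comp T)

theorem WeakConvTo.tendsto_toWeakSpace {x : ℕ → E} {x₀ : E} (hx : WeakConvTo x x₀) :
    Tendsto (fun n => toWeakSpace ℝ E (x n)) atTop (𝓝 (toWeakSpace ℝ E x₀)) := by
  have : IsInducing fun (y : WeakSpace ℝ E) (f : E →L[ℝ] ℝ) => f y := ⟨rfl⟩
  rw [this.tendsto_nhds_iff, tendsto_pi_nhds]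
  exact hx

theorem WeakConvTo.mem_of_isClosed {x : ℕ → E} {x₀ : E} (hx : WeakConvTo x x₀)
    {p : Submodule ℝ E} (hp : IsClosed (p : Set E)) (hxp : ∀ n, x n ∈ p) : x₀ ∈ p := by
  have : toWeakSpace ℝ E x₀ ∈ closure (toWeakSpace ℝ E '' p) :=
    mem_closure_of_tendsto hx.tendsto_toWeakSpace (.of_forall fun n => ⟨_, hxp n, rfl⟩)
  rwa [← p.convex.toWeakSpace_closure ℝ, hp.closure_eq,
    (toWeakSpace ℝ E).injective.mem_set_image] at this

theorem AntilipschitzWith.exists_dual_comp_eq {K : NNReal} {S : E →L[ℝ] F}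
    (hS : AntilipschitzWith K S) (g : StrongDual ℝ E) :
    ∃ f : StrongDual ℝ F, f.comp S = g := by
  let e := LinearEquiv.ofInjective S.toLinearMap hS.injective
  have hSe : ∀ z, S (e.symm z) = z := fun z => congrArg Subtype.val (e.apply_symm_apply z)
  have hbound : ∀ z, ‖g (e.symm z)‖ ≤ ‖g‖ * K * ‖z‖ := fun z =>
    calc ‖g (e.symm z)‖ ≤ ‖g‖ * ‖e.symm z‖ := g.le_opNorm _
      _ ≤ ‖g‖ * (K * ‖S (e.symm z)‖) := by
        gcongr; exact ZeroHomClass.bound_of_antilipschitz S hS _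
      _ = ‖g‖ * K * ‖z‖ := by rw [hSe, mul_assoc]; rfl
  let g₀ : StrongDual ℝ (LinearMap.range S.toLinearMap) :=
    (g.toLinearMap ∘ₗ e.symm.toLinearMap).mkContinuous _ hbound
  obtain ⟨f, hf, -⟩ := exists_extension_norm_eq _ g₀
  refine ⟨f, ContinuousLinearMap.ext fun x => ?_⟩
  simpa [g₀, e] using hf (e x)

theorem WeakConvTo.of_antilipschitz {K : NNReal} {S : E →L[ℝ] F} (hS : AntilipschitzWith K S)
    {x : ℕ → E} {x₀ : E} (hx : WeakConvTo (fun n => S (x n)) (S x₀)) :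
    WeakConvTo x x₀ := by
  intro g
  obtain ⟨f, rfl⟩ := hS.exists_dual_comp_eq g
  exact hx f

theorem AlmostReflexive.submodule (hE : AlmostReflexive E) (p : Submodule ℝ E) :
    AlmostReflexive p := by
  rintro x ⟨C, hC⟩
  obtain ⟨φ, hφ, hx⟩ := hE (fun n => (x n : E)) ⟨C, hC⟩
  refine ⟨φ, hφ, fun g => ?_⟩
  obtain ⟨f, hf, -⟩ := exists_extension_norm_eq p g
  simpa [hf] using hx f

theorem AlmostReflexive.seqReflexive_of_antilipschitz [CompleteSpace E] (hE : AlmostReflexive E)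
    (hF : WeaklySeqComplete F) {K : NNReal} {S : E →L[ℝ] F} (hS : AntilipschitzWith K S) :
    SeqReflexive E := by
  intro x hx
  obtain ⟨φ, hφ, hcauchy⟩ := hE x hx
  obtain ⟨y, hy⟩ := hF _ (hcauchy.map S)
  have hrange : IsClosed (LinearMap.range S.toLinearMap : Set F) := by
    rw [LinearMap.coe_range]
    exact hS.isClosed_range S.uniformContinuous
  obtain ⟨x₀, rfl⟩ :=
    hy.mem_of_isClosed hrange fun n => LinearMap.mem_range_self S.toLinearMap _
  exact ⟨φ, hφ, x₀, WeakConvTo.of_antilipschitz hS hy⟩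

end WeakSequences

variable {X : Type*} [NormedAddCommGroup X] [NormedSpace ℝ X] [CompleteSpace X]
variable {Y : Type*} [NormedAddCommGroup Y] [NormedSpace ℝ Y] [CompleteSpace Y]

/-- If `X` is almost reflexive and very-irreflexive and `Y` is weakly sequentially complete,
then every bounded linear operator `T : X → Y` is strictly singular. -/
theorem stmt15 (hX : AlmostReflexive X) (hX' : VeryIrreflexive X) (hY : WeaklySeqComplete Y)
    (T : X →L[ℝ] Y) : StrictlySingular T := by
  rintro X₀ hX₀ hinf ⟨c, hc, hbound⟩
  have : CompleteSpace X₀ := hX₀.completeSpace_coe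
  obtain ⟨K, hS⟩ := antilipschitzWith_iff_exists_mul_le_norm (f := T.comp X₀.subtypeL) |>.2
    ⟨c, hc, fun z => hbound z z.2⟩
  exact hX' X₀ hX₀ hinf ((hX.submodule X₀).seqReflexive_of_antilipschitz hY hS)
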